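/- arXiv:2603.04298 — 3 statements merged into one kernel-verified Lean document; each statement's English description precedes it below -/
import Mathlib

section
/- Let g ∈ ℝ[[w]] be nonzero with ord(g) = k ≥ 1. Then dim_ℝ(ℝ[[w]]/⟨g⟩) − 2·dim_ℝ(J_max) equals 1 if k is odd and 0 if k is even, where J_max is a maximal square-zero ideal of ℝ[[w]]/⟨g⟩. -/
/-!
`ℝ⟦w⟧` is a discrete valuation ring with uniformizer `w`, and `g = w ^ k · u` with `u` a unit, so
`ℝ⟦w⟧ ⧸ ⟨g⟩ = ℝ⟦w⟧ ⧸ (w ^ k)`, of dimension `k`. Every ideal of this quotient is generated by the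
class of some `w ^ n`, and it is square-zero iff `k ≤ 2n`; hence the maximal square-zero ideal is
`(w ^ ⌈k/2⌉)`, of dimension `k - ⌈k/2⌉ = ⌊k/2⌋`, and `k - 2⌊k/2⌋` is the parity of `k`.
-/

open Ideal Module

namespace PowerSeries

section CommRing

variable {R : Type*} [CommRing R]

noncomputable def coeffsBelow (d : ℕ) : R⟦X⟧ →ₗ[R] (Fin d → R) :=
  LinearMap.pi fun i => coeff (i : ℕ)

theorem coeffsBelow_surjective (d : ℕ) : Function.Surjective (coeffsBelow (R := R) d) := by
  intro v
  refine ⟨mk fun n => if h : n < d then v ⟨n, h⟩ else 0, funext fun i => ?_⟩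
  simp [coeffsBelow]

theorem ker_coeffsBelow (d : ℕ) :
    LinearMap.ker (coeffsBelow (R := R) d) = (span {(X : R⟦X⟧) ^ d}).restrictScalars R := by
  ext f
  simp only [LinearMap.mem_ker, Submodule.restrictScalars_mem, mem_span_singleton,
    X_pow_dvd_iff, funext_iff, coeffsBelow, LinearMap.pi_apply, Pi.zero_apply]
  exact ⟨fun h m hm => h ⟨m, hm⟩, fun h i => h i i.isLt⟩

noncomputable def quotientSpanXPowEquiv (d : ℕ) :
    (R⟦X⟧ ⧸ span {(X : R⟦X⟧) ^ d}) ≃ₗ[R] (Fin d → R) :=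
  (Submodule.Quotient.restrictScalarsEquiv R (span {(X : R⟦X⟧) ^ d})).symm.trans <|
    (Submodule.quotEquivOfEq _ _ (ker_coeffsBelow d).symm).trans
      ((coeffsBelow d).quotKerEquivOfSurjective (coeffsBelow_surjective d))

instance (d : ℕ) : Module.Finite R (R⟦X⟧ ⧸ span {(X : R⟦X⟧) ^ d}) :=
  Module.Finite.equiv (quotientSpanXPowEquiv d).symm

theorem finrank_quotient_span_X_pow [StrongRankCondition R] (d : ℕ) :
    finrank R (R⟦X⟧ ⧸ span {(X : R⟦X⟧) ^ d}) = d := by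
  rw [(quotientSpanXPowEquiv d).finrank_eq, finrank_fin_fun]

end CommRing

section Field

variable {K : Type*} [Field K]

theorem span_singleton_eq_span_X_pow_of_order_eq {g : K⟦X⟧} {k : ℕ} (hk : g.order = k) :
    span {g} = span {(X : K⟦X⟧) ^ k} := by
  have hg : g ≠ 0 := by rintro rfl; simp at hk
  conv_lhs => rw [← X_pow_order_mul_divXPowOrder (f := g), hk, ENat.toNat_natCast]
  exact span_singleton_mul_right_unit (isUnit_divided_by_X_pow_order hg) _

theorem finrank_map_span_X_pow {m k : ℕ} (hmk : m ≤ k) :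
    finrank K (((span {(X : K⟦X⟧) ^ m}).map (Ideal.Quotient.mk (span {X ^ k}))).restrictScalars K) =
      k - m := by
  set J := (span {(X : K⟦X⟧) ^ m}).map (Ideal.Quotient.mk (span {X ^ k}))
  have hle : span {(X : K⟦X⟧) ^ k} ≤ span {X ^ m} :=
    span_singleton_le_span_singleton.2 (pow_dvd_pow X hmk)
  have hquot : finrank K ((K⟦X⟧ ⧸ span {X ^ k}) ⧸ J.restrictScalars K) = m := by
    rw [(Submodule.Quotient.restrictScalarsEquiv K J).finrank_eq]
    exact (DoubleQuot.quotQuotEquivQuotOfLEₐ K hle).toLinearEquiv.finrank_eq.trans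
      (finrank_quotient_span_X_pow m)
  have hrank := (J.restrictScalars K).finrank_quotient_add_finrank
  rw [hquot, finrank_quotient_span_X_pow] at hrank
  omega

end Field

end PowerSeries

namespace Ideal

variable {R : Type*} [CommRing R] [IsDomain R] {ϖ : R}

theorem map_span_pow_mul_self_eq_bot_iff (hϖ₀ : ϖ ≠ 0) (hϖ : ¬IsUnit ϖ) {k m : ℕ} :
    (span {ϖ ^ m}).map (Quotient.mk (span {ϖ ^ k})) *
        (span {ϖ ^ m}).map (Quotient.mk (span {ϖ ^ k})) = ⊥ ↔ k ≤ 2 * m := by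
  rw [← Ideal.map_mul, span_singleton_mul_span_singleton, ← pow_add, map_eq_bot_iff_le_ker,
    mk_ker, span_singleton_le_span_singleton, pow_dvd_pow_iff hϖ₀ hϖ]
  omega

variable [IsDiscreteValuationRing R]

theorem exists_eq_map_span_pow (hϖ : Irreducible ϖ) {I : Ideal R} (hI : I ≠ ⊥)
    (J : Ideal (R ⧸ I)) : ∃ n : ℕ, J = (span {ϖ ^ n}).map (Quotient.mk I) := by
  have hJ : J.comap (Quotient.mk I) ≠ ⊥ := fun h =>
    hI (eq_bot_iff.2 (h ▸ fun x hx => by simp [Quotient.eq_zero_iff_mem.2 hx]))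
  obtain ⟨n, hn⟩ := IsDiscreteValuationRing.ideal_eq_span_pow_irreducible hJ hϖ
  exact ⟨n, by rw [← hn, map_comap_of_surjective _ Quotient.mk_surjective]⟩

theorem eq_map_span_pow_of_maximal_mul_self_eq_bot (hϖ : Irreducible ϖ) {k : ℕ}
    {J : Ideal (R ⧸ span {ϖ ^ k})} (hJ : J * J = ⊥)
    (hJmax : ∀ J' : Ideal (R ⧸ span {ϖ ^ k}), J' * J' = ⊥ → J ≤ J' → J' = J) :
    J = (span {ϖ ^ ((k + 1) / 2)}).map (Quotient.mk (span {ϖ ^ k})) := by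
  have hI : span {ϖ ^ k} ≠ ⊥ := by simp [hϖ.ne_zero]
  obtain ⟨n, rfl⟩ := exists_eq_map_span_pow hϖ hI J
  have hn := (map_span_pow_mul_self_eq_bot_iff hϖ.ne_zero hϖ.not_isUnit).1 hJ
  exact (hJmax _ ((map_span_pow_mul_self_eq_bot_iff hϖ.ne_zero hϖ.not_isUnit).2 (by omega))
    (map_mono (span_singleton_le_span_singleton.2 (pow_dvd_pow ϖ (by omega))))).symm

end Ideal

theorem stmt5_general (g : PowerSeries ℝ) (k : ℕ) (hk : g.order = k)
    (J : Ideal (PowerSeries ℝ ⧸ Ideal.span {g}))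
    (hJ : J * J = ⊥)
    (hJmax : ∀ J' : Ideal (PowerSeries ℝ ⧸ Ideal.span {g}), J' * J' = ⊥ → J ≤ J' → J' = J) :
    Module.finrank ℝ (PowerSeries ℝ ⧸ Ideal.span {g}) -
        2 * Module.finrank ℝ (Submodule.restrictScalars ℝ J) =
      if Odd k then 1 else 0 := by
  revert J
  rw [PowerSeries.span_singleton_eq_span_X_pow_of_order_eq hk]
  intro J hJ hJmax
  rw [eq_map_span_pow_of_maximal_mul_self_eq_bot PowerSeries.X_irreducible hJ hJmax,
    PowerSeries.finrank_quotient_span_X_pow, PowerSeries.finrank_map_span_X_pow (by omega)]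
  simp only [Nat.odd_iff]
  split_ifs <;> omega

/-- For nonzero `g ∈ ℝ⟦w⟧` with `ord(g) = k ≥ 1`, and any maximal
square-zero ideal `J` of `ℝ⟦w⟧/⟨g⟩`, the quantity `dim_ℝ(ℝ⟦w⟧/⟨g⟩) − 2·dim_ℝ J`
is `1` if `k` is odd and `0` if `k` is even. -/
theorem stmt5 (g : PowerSeries ℝ) (hg : g ≠ 0) (k : ℕ) (hk1 : 1 ≤ k) (hk : g.order = k)
    (J : Ideal (PowerSeries ℝ ⧸ Ideal.span {g}))
    (hJ : J * J = ⊥)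
    (hJmax : ∀ J' : Ideal (PowerSeries ℝ ⧸ Ideal.span {g}), J' * J' = ⊥ → J ≤ J' → J' = J) :
    Module.finrank ℝ (PowerSeries ℝ ⧸ Ideal.span {g}) -
        2 * Module.finrank ℝ (Submodule.restrictScalars ℝ J) =
      if Odd k then 1 else 0 :=
  stmt5_general g k hk J hJ hJmax
end

section
/- Consider the ideal I = ⟨x − y + xy, y − z + yz, z − x + zx⟩ in ℝ[[x,y,z]]. The quotient algebra ℝ[[x,y,z]]/I is a 2-dimensional real vector space, with basis the classes of 1 and z. -/
/-!
Write `x, y, z` for `X 0, X 1, X 2`. Modulo `I` the three relations force `3 z² = 0`, and since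
`1 - z` and `1 + z` are units they give `x ≡ z` and `y ≡ z`. Hence every product of two variables
lies in `I`, so every series is congruent to its first-order part:
`f ≡ f(0) + (∂ₓf(0) + ∂_yf(0) + ∂_zf(0)) z`. The substitution `x, y, z ↦ ε` into the dual numbers
`ℝ[ε]` kills `I` and reads off exactly these two numbers, so `ℝ[[x,y,z]]/I ≃ ℝ[ε]`, whose basis
is `1, ε`.
-/

open MvPowerSeries DualNumber TrivSqZeroExt Finsupp

namespace MvPowerSeries

variable {σ R : Type*}

theorem coeff_single_one_mul [CommSemiring R] (i : σ) (p q : MvPowerSeries σ R) :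
    coeff (single i 1) (p * q) =
      constantCoeff p * coeff (single i 1) q + coeff (single i 1) p * constantCoeff q := by
  classical
  rw [coeff_mul, antidiagonal_single,
    show Finset.HasAntidiagonal.antidiagonal (1 : ℕ) = {(0, 1), (1, 0)} from rfl]
  simp [coeff_zero_eq_constantCoeff]

theorem coeff_single_one_X [CommSemiring R] [DecidableEq σ] (i j : σ) :
    coeff (single i 1) (X j : MvPowerSeries σ R) = if i = j then 1 else 0 := by
  simp [coeff_X, single_eq_single_iff]

theorem coeff_single_one_X_mul [CommSemiring R] [DecidableEq σ] (i j : σ)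
    (p : MvPowerSeries σ R) :
    coeff (single i 1) (X j * p) = if i = j then constantCoeff p else 0 := by
  rw [coeff_single_one_mul, coeff_single_one_X]
  simp [constantCoeff_X]

theorem exists_eq_X_mul_add [CommRing R] (j : σ) (g : MvPowerSeries σ R) :
    ∃ b h : MvPowerSeries σ R,
      g = X j * b + h ∧ ∀ m, coeff m h = if m j = 0 then coeff m g else 0 := by
  let h : MvPowerSeries σ R := fun m => if m j = 0 then coeff m g else 0
  obtain ⟨b, hb⟩ : X j ∣ g - h := X_dvd_iff.mpr fun m hm => by
    rw [map_sub, coeff_apply h m]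
    simp [h, hm]
  exact ⟨b, h, eq_add_of_sub_eq hb, fun _ => rfl⟩

theorem exists_eq_C_add_sum_X_mul [CommRing R] [Fintype σ] (f : MvPowerSeries σ R) :
    ∃ a : σ → MvPowerSeries σ R, f = C (constantCoeff f) + ∑ i, X i * a i := by
  classical
  suffices h : ∀ s : Finset σ, ∃ a : σ → MvPowerSeries σ R, ∀ m, (∃ i ∈ s, m i ≠ 0) →
      coeff m (f - ∑ i ∈ s, X i * a i) = 0 by
    obtain ⟨a, ha⟩ := h Finset.univ
    refine ⟨a, eq_add_of_sub_eq ?_⟩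
    ext m
    by_cases hm : m = 0
    · simp [hm, coeff_zero_eq_constantCoeff, constantCoeff_X]
    · rw [coeff_C, if_neg hm]
      obtain ⟨i, hi⟩ : ∃ i, m i ≠ 0 := by
        by_contra! h
        exact hm (Finsupp.ext h)
      exact ha m ⟨i, Finset.mem_univ i, hi⟩
  intro s
  induction s using Finset.induction_on with
  | empty => exact ⟨0, by simp⟩
  | insert j s hj ih =>
    obtain ⟨a, ha⟩ := ih
    obtain ⟨b, h, hg, hh⟩ := exists_eq_X_mul_add j (f - ∑ i ∈ s, X i * a i)
    refine ⟨Function.update a j b, fun m ⟨i, hi, hmi⟩ => ?_⟩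
    have hsum : f - ∑ i ∈ insert j s, X i * Function.update a j b i = h := by
      rw [Finset.sum_insert hj, Function.update_self, Finset.sum_congr rfl fun i hi => by
        rw [Function.update_of_ne (ne_of_mem_of_not_mem hi hj)]]
      linear_combination hg
    rw [hsum, hh]
    split_ifs with hmj
    · rcases Finset.mem_insert.mp hi with rfl | hi
      · exact absurd hmj hmi
      · exact ha m ⟨i, hi, hmi⟩
    · rfl

theorem algHom_apply_eq_of_map_X_mul_map_X [CommRing R] [Fintype σ] {B : Type*} [Ring B]
    [Algebra R B] (φ : MvPowerSeries σ R →ₐ[R] B) (hφ : ∀ i j, φ (X i) * φ (X j) = 0)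
    (f : MvPowerSeries σ R) :
    φ f = algebraMap R B (constantCoeff f) + ∑ i, coeff (single i 1) f • φ (X i) := by
  classical
  obtain ⟨a, ha⟩ := exists_eq_C_add_sum_X_mul f
  have hcoeff (i : σ) : coeff (single i 1) f = constantCoeff (a i) := by
    conv_lhs => rw [ha]
    simp [coeff_single_one_X_mul, coeff_C]
  have hterm (i : σ) : φ (X i * a i) = constantCoeff (a i) • φ (X i) := by
    obtain ⟨b, hb⟩ := exists_eq_C_add_sum_X_mul (a i)
    conv_lhs => rw [hb]
    simp [mul_add, Finset.mul_sum, ← mul_assoc, hφ, Algebra.smul_def, Algebra.commutes,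
      c_eq_algebraMap]
  conv_lhs => rw [ha]
  simp [hterm, hcoeff, c_eq_algebraMap]

/-- The substitution `X i ↦ ε` for every `i`. -/
noncomputable def evalEps [CommSemiring R] [Fintype σ] : MvPowerSeries σ R →ₐ[R] R[ε] where
  toFun f := inl (constantCoeff f) + inr (∑ i, coeff (single i 1) f)
  map_one' := by classical ext <;> simp [coeff_one]
  map_mul' p q := by
    ext <;> simp [coeff_single_one_mul, Finset.sum_add_distrib, Finset.mul_sum, Finset.sum_mul]
  map_zero' := by ext <;> simp
  map_add' p q := by ext <;> simp [Finset.sum_add_distrib]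
  commutes' r := by classical ext <;> simp [← c_eq_algebraMap, coeff_C, algebraMap_eq_inl]

@[simp]
theorem fst_evalEps [CommSemiring R] [Fintype σ] (f : MvPowerSeries σ R) :
    fst (evalEps f) = constantCoeff f := by
  simp [evalEps]

@[simp]
theorem snd_evalEps [CommSemiring R] [Fintype σ] (f : MvPowerSeries σ R) :
    snd (evalEps f) = ∑ i, coeff (single i 1) f := by
  simp [evalEps]

theorem evalEps_X [CommSemiring R] [Fintype σ] (i : σ) :
    evalEps (X i : MvPowerSeries σ R) = ε := by
  classical
  ext <;> simp [constantCoeff_X, coeff_single_one_X]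

end MvPowerSeries

namespace DualNumber

variable (R : Type*) [CommSemiring R]

noncomputable def basisOneEps : Module.Basis (Fin 2) R R[ε] :=
  .ofEquivFun
    { toFun := fun x => ![fst x, snd x]
      invFun := fun v => inl (v 0) + inr (v 1)
      map_add' _ _ := by ext i; fin_cases i <;> rfl
      map_smul' _ _ := by ext i; fin_cases i <;> rfl
      left_inv _ := by ext <;> simp
      right_inv _ := by ext i; fin_cases i <;> simp }

@[simp]
theorem basisOneEps_zero : basisOneEps R 0 = 1 := by
  ext <;> simp [basisOneEps]

@[simp]
theorem basisOneEps_one : basisOneEps R 1 = ε := by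
  ext <;> simp [basisOneEps]

end DualNumber

theorem sq_eq_zero_and_eq_of_cyclic_relations {Q : Type*} [CommRing Q] {a b c : Q}
    (hab : a - b + a * b = 0) (hbc : b - c + b * c = 0) (hca : c - a + c * a = 0)
    (h3 : IsUnit (3 : Q)) (hsub : IsUnit (1 - c)) (hadd : IsUnit (1 + c)) :
    c ^ 2 = 0 ∧ a = c ∧ b = c := by
  have hc : c ^ 2 = 0 := h3.mul_right_eq_zero.mp <| by
    linear_combination (1 - c ^ 2) * hab + (1 - 2 * c) * hbc +
      (1 + 2 * c + (b - c + b * c)) * hca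
  refine ⟨hc, hsub.mul_left_inj.mp ?_, hadd.mul_left_inj.mp ?_⟩
  · linear_combination -hca + hc
  · linear_combination hbc - hc

noncomputable def indifferenceIdeal : Ideal (MvPowerSeries (Fin 3) ℝ) :=
  Ideal.span {X 0 - X 1 + X 0 * X 1, X 1 - X 2 + X 1 * X 2, X 2 - X 0 + X 2 * X 0}

local notation "π" => Ideal.Quotient.mk indifferenceIdeal

theorem mk_indifferenceIdeal_X_sq_and_eq :
    π (X 2) ^ 2 = 0 ∧ π (X 0) = π (X 2) ∧ π (X 1) = π (X 2) := by
  have hgen (f : MvPowerSeries (Fin 3) ℝ) (hf : f ∈ ({X 0 - X 1 + X 0 * X 1,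
      X 1 - X 2 + X 1 * X 2, X 2 - X 0 + X 2 * X 0} : Set _)) : π f = 0 :=
    Ideal.Quotient.eq_zero_iff_mem.mpr (Ideal.subset_span hf)
  have hunit {f : MvPowerSeries (Fin 3) ℝ} (hf : constantCoeff f ≠ 0) : IsUnit (π f) :=
    (isUnit_iff_constantCoeff.mpr (isUnit_iff_ne_zero.mpr hf)).map π
  refine sq_eq_zero_and_eq_of_cyclic_relations ?_ ?_ ?_ ?_ ?_ ?_
  iterate 3 (rw [← map_mul, ← map_sub, ← map_add]; exact hgen _ (by simp))
  · rw [← map_ofNat π 3]; exact hunit (by rw [map_ofNat]; norm_num)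
  · rw [← map_one π, ← map_sub]; exact hunit (by simp [constantCoeff_X])
  · rw [← map_one π, ← map_add]; exact hunit (by simp [constantCoeff_X])

theorem mk_indifferenceIdeal_eq (f : MvPowerSeries (Fin 3) ℝ) :
    π f = algebraMap ℝ _ (constantCoeff f) + (∑ i, coeff (single i 1) f) • π (X 2) := by
  obtain ⟨hsq, h0, h1⟩ := mk_indifferenceIdeal_X_sq_and_eq
  have hX (i : Fin 3) : Ideal.Quotient.mkₐ ℝ indifferenceIdeal (X i) = π (X 2) := by
    fin_cases i <;> simp [h0, h1]
  rw [← Ideal.Quotient.mkₐ_eq_mk ℝ,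
    algHom_apply_eq_of_map_X_mul_map_X _ (by simp [hX, ← sq, hsq]) f]
  simp [hX, Finset.sum_smul]

theorem evalEps_eq_zero_of_mem_indifferenceIdeal {f : MvPowerSeries (Fin 3) ℝ}
    (hf : f ∈ indifferenceIdeal) : evalEps f = 0 := by
  have hle : indifferenceIdeal ≤ RingHom.ker (evalEps : MvPowerSeries (Fin 3) ℝ →ₐ[ℝ] ℝ[ε]) := by
    rw [indifferenceIdeal, Ideal.span_le]
    rintro _ (rfl | rfl | rfl) <;> simp [evalEps_X, eps_mul_eps]
  exact RingHom.mem_ker.mp (hle hf)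

theorem bijective_liftₐ_evalEps :
    Function.Bijective (Ideal.Quotient.liftₐ indifferenceIdeal evalEps
      fun _ => evalEps_eq_zero_of_mem_indifferenceIdeal) := by
  refine ⟨(injective_iff_map_eq_zero _).mpr fun q hq => ?_,
    fun d => ⟨algebraMap ℝ _ d.fst + d.snd • π (X 2), ?_⟩⟩
  · obtain ⟨f, rfl⟩ := Ideal.Quotient.mk_surjective q
    change evalEps f = 0 at hq
    have hfst : constantCoeff f = 0 := by simpa using congrArg fst hq
    have hsnd : ∑ i, coeff (single i 1) f = 0 := by simpa using congrArg snd hq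
    rw [mk_indifferenceIdeal_eq, hfst, hsnd, map_zero, zero_smul, add_zero]
  · rw [map_add, map_smul, AlgHom.commutes]
    change _ + _ • evalEps (X 2) = _
    ext <;> simp [evalEps_X, algebraMap_eq_inl]

noncomputable def quotientIndifferenceIdealEquiv :
    (MvPowerSeries (Fin 3) ℝ ⧸ indifferenceIdeal) ≃ₐ[ℝ] ℝ[ε] :=
  AlgEquiv.ofBijective _ bijective_liftₐ_evalEps

theorem exists_basis_quotient_indifferenceIdeal :
    ∃ b : Module.Basis (Fin 2) ℝ (MvPowerSeries (Fin 3) ℝ ⧸ indifferenceIdeal),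
      b 0 = π 1 ∧ b 1 = π (X 2) := by
  refine ⟨(basisOneEps ℝ).map quotientIndifferenceIdealEquiv.symm.toLinearEquiv, ?_, ?_⟩
  · rw [Module.Basis.map_apply, basisOneEps_zero, AlgEquiv.toLinearEquiv_apply, map_one,
      map_one]
  · rw [Module.Basis.map_apply, basisOneEps_one, AlgEquiv.toLinearEquiv_apply,
      AlgEquiv.symm_apply_eq]
    exact (evalEps_X 2).symm

/-- For `I = ⟨x − y + xy, y − z + yz, z − x + zx⟩ ⊆ ℝ[[x,y,z]]`, the
quotient `ℝ[[x,y,z]]/I` is a 2-dimensional real vector space with basis the classes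
of `1` and `z`. -/
theorem stmt10 :
    letI A := MvPowerSeries (Fin 3) ℝ
    letI x : A := MvPowerSeries.X 0
    letI y : A := MvPowerSeries.X 1
    letI z : A := MvPowerSeries.X 2
    letI I : Ideal A := Ideal.span {x - y + x * y, y - z + y * z, z - x + z * x}
    Module.finrank ℝ (A ⧸ I) = 2 ∧
    ∃ b : Module.Basis (Fin 2) ℝ (A ⧸ I),
      b 0 = Ideal.Quotient.mk I 1 ∧ b 1 = Ideal.Quotient.mk I z := by
  obtain ⟨b, hb0, hb1⟩ := exists_basis_quotient_indifferenceIdeal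
  exact ⟨(Module.finrank_eq_card_basis b).trans (Fintype.card_fin 2), b, hb0, hb1⟩
end

section
/- In ℝ[[x,y,z]] with I = ⟨x − y + xy, y − z + yz, z − x + zx⟩, the element z² belongs to I. -/
/-!
Writing `g₁ = x - y + xy`, `g₂ = y - z + yz`, `g₃ = z - x + zx`, one has the identity
`(1 - z²) g₁ + (1 - 2z + g₃) g₂ + (1 + 2z) g₃ = 3z²` in any commutative ring, so `z²` lies in the
ideal as soon as `3` is invertible.
-/

theorem three_mul_sq_mem_span_cyclic {A : Type*} [CommRing A] (x y z : A) :
    3 * z ^ 2 ∈ Ideal.span {x - y + x * y, y - z + y * z, z - x + z * x} := by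
  set I := Ideal.span {x - y + x * y, y - z + y * z, z - x + z * x}
  have h₁ : x - y + x * y ∈ I := Ideal.subset_span (by simp)
  have h₂ : y - z + y * z ∈ I := Ideal.subset_span (by simp)
  have h₃ : z - x + z * x ∈ I := Ideal.subset_span (by simp)
  have hcomb : 3 * z ^ 2 = (1 - z ^ 2) * (x - y + x * y)
      + (1 - 2 * z + (z - x + z * x)) * (y - z + y * z) + (1 + 2 * z) * (z - x + z * x) := by
    ring
  rw [hcomb]
  exact I.add_mem (I.add_mem (I.mul_mem_left _ h₁) (I.mul_mem_left _ h₂)) (I.mul_mem_left _ h₃)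

theorem sq_mem_span_cyclic {A : Type*} [CommRing A] (h3 : IsUnit (3 : A)) (x y z : A) :
    z ^ 2 ∈ Ideal.span {x - y + x * y, y - z + y * z, z - x + z * x} :=
  (Ideal.unit_mul_mem_iff_mem _ h3).mp (three_mul_sq_mem_span_cyclic x y z)

theorem isUnit_three_of_algebra_real (A : Type*) [Ring A] [Algebra ℝ A] : IsUnit (3 : A) := by
  have h := (isUnit_iff_ne_zero.mpr (three_ne_zero : (3 : ℝ) ≠ 0)).map (algebraMap ℝ A)
  rwa [map_ofNat] at h

/-- In `ℝ[[x,y,z]]` with `I = ⟨x − y + xy, y − z + yz, z − x + zx⟩`,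
the element `z²` belongs to `I`. -/
theorem stmt11 :
    letI A := MvPowerSeries (Fin 3) ℝ
    letI x : A := MvPowerSeries.X 0
    letI y : A := MvPowerSeries.X 1
    letI z : A := MvPowerSeries.X 2
    z ^ 2 ∈ Ideal.span {x - y + x * y, y - z + y * z, z - x + z * x} :=
  sq_mem_span_cyclic (isUnit_three_of_algebra_real _) _ _ _
end
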